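/- Let A ∈ ℝ^{n×m} have rank-k truncated SVD A_k and let Ã_k be another rank-k matrix with Ã_k = P̃_k A for an orthogonal projection P̃_k onto its column space. Then ‖Ã_k Ã_kᵀ (A_kᵀ)† − A_k‖ ≤ (1 + σ₁(A)/σ_k(A)) ‖A_k − Ã_k‖ in spectral norm. -/

import Mathlib

open Matrix

/-- Moore–Penrose pseudoinverse predicate (the four Penrose conditions). -/
def IsMP {p q : ℕ} (A : Matrix (Fin p) (Fin q) ℝ) (X : Matrix (Fin q) (Fin p) ℝ) : Prop :=
  A * X * A = A ∧ X * A * X = X ∧ (A * X)ᵀ = A * X ∧ (X * A)ᵀ = X * A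

/-- spectral (operator) norm of a matrix, induced by Euclidean vector norms. -/
noncomputable def specNorm {p q : ℕ} (A : Matrix (Fin p) (Fin q) ℝ) : ℝ :=
  ‖LinearMap.toContinuousLinearMap (Matrix.toEuclideanLin A)‖

/-- Euclidean norm of a vector. -/
noncomputable def enorm {p : ℕ} (x : Fin p → ℝ) : ℝ :=
  ‖(WithLp.equiv 2 (Fin p → ℝ)).symm x‖

theorem Matrix.isHermitian_transpose_mul_self {m n α : Type*} [Fintype m] [CommSemiring α]
    [StarRing α] [TrivialStar α] (A : Matrix m n α) : (Aᵀ * A).IsHermitian := by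
  simpa using Matrix.isHermitian_conjTranspose_mul_self A

/-- the `i`-th largest singular value (0-indexed) of a real matrix. -/
noncomputable def sv {p q : ℕ} (A : Matrix (Fin p) (Fin q) ℝ) (i : Fin q) : ℝ :=
  Real.sqrt (((Matrix.isHermitian_transpose_mul_self A).eigenvalues ∘
    Tuple.sort (Matrix.isHermitian_transpose_mul_self A).eigenvalues) i.rev)

/-!
Using `Aₖ Aₖᵀ X = Aₖ`, split `Ãₖ Ãₖᵀ X − Aₖ = Ãₖ (Ãₖ − Aₖ)ᵀ X + (Ãₖ − Aₖ) (Aₖᵀ X)`.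
The second term is at most `‖Aₖ − Ãₖ‖` because `Aₖᵀ X` is an orthogonal projection; the first is
at most `‖Ãₖ‖ ‖Aₖ − Ãₖ‖ ‖X‖ ≤ σ₁ ‖Aₖ − Ãₖ‖ / σₖ`. The bound `‖X‖ ≤ 1 / σₖ` comes from uniqueness
of the pseudoinverse: `X = U Σₖ⁺ Vᵀ`, where `Σₖ⁺` is `Σₖᵀ` with its nonzero entries (all `≥ σₖ`)
inverted.
-/

open scoped Matrix.Norms.L2Operator

namespace Matrix

variable {m n l p : Type*} [Fintype m] [Fintype n] [Fintype l] [Fintype p]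

theorem l2_opNorm_transpose [DecidableEq m] [DecidableEq n] (A : Matrix m n ℝ) :
    ‖Aᵀ‖ = ‖A‖ := by
  rw [← conjTranspose_eq_transpose_of_trivial, l2_opNorm_conjTranspose]

theorem l2_opNorm_isometry_mul [DecidableEq n] [DecidableEq l] {U : Matrix m n ℝ}
    (hU : Uᵀ * U = 1) (M : Matrix n l ℝ) : ‖U * M‖ = ‖M‖ := by
  have h : (U * M)ᴴ * (U * M) = Mᴴ * M := by
    simp only [conjTranspose_eq_transpose_of_trivial, transpose_mul, Matrix.mul_assoc,
      ← Matrix.mul_assoc Uᵀ, hU, Matrix.one_mul]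
  rw [← mul_self_inj (norm_nonneg _) (norm_nonneg _), ← l2_opNorm_conjTranspose_mul_self,
    ← l2_opNorm_conjTranspose_mul_self, h]

theorem l2_opNorm_isometry_mul_mul_transpose [DecidableEq m] [DecidableEq n]
    [DecidableEq l] [DecidableEq p] {U : Matrix m n ℝ} {V : Matrix p l ℝ} (hU : Uᵀ * U = 1)
    (hV : Vᵀ * V = 1) (M : Matrix n l ℝ) : ‖U * M * Vᵀ‖ = ‖M‖ := by
  rw [← l2_opNorm_transpose, transpose_mul, transpose_transpose, l2_opNorm_isometry_mul hV,
    l2_opNorm_transpose, l2_opNorm_isometry_mul hU]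

theorem l2_opNorm_le_one_of_transpose_eq_of_mul_self_eq [DecidableEq n] {P : Matrix n n ℝ}
    (hsymm : Pᵀ = P) (hidem : P * P = P) : ‖P‖ ≤ 1 :=
  IsStarProjection.norm_le P ⟨hidem, by
    rw [IsSelfAdjoint, star_eq_conjTranspose, conjTranspose_eq_transpose_of_trivial, hsymm]⟩

end Matrix

namespace IsMP

variable {p q : ℕ} {A : Matrix (Fin p) (Fin q) ℝ} {X : Matrix (Fin q) (Fin p) ℝ}

theorem unique {Y : Matrix (Fin q) (Fin p) ℝ} (hX : IsMP A X) (hY : IsMP A Y) : X = Y := by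
  obtain ⟨hX1, hX2, hX3, hX4⟩ := hX
  obtain ⟨hY1, hY2, hY3, hY4⟩ := hY
  have hAX : A * X = A * Y := calc
    A * X = (A * Y * A * X)ᵀ := by rw [hY1, hX3]
    _ = (A * X) * (A * Y) := by rw [Matrix.mul_assoc, transpose_mul, hX3, hY3]
    _ = A * Y := by rw [← Matrix.mul_assoc, hX1]
  have hXA : X * A = Y * A := calc
    X * A = X * (A * Y * A) := by rw [hY1]
    _ = (Y * A * (X * A))ᵀ := by rw [transpose_mul, hX4, hY4]; simp only [Matrix.mul_assoc]
    _ = Y * A := by rw [Matrix.mul_assoc, ← Matrix.mul_assoc A, hX1, hY4]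
  rw [← hX2, Matrix.mul_assoc, hAX, ← Matrix.mul_assoc, hXA, hY2]

theorem isometry_mul_mul_transpose {r s : ℕ} {U : Matrix (Fin r) (Fin q) ℝ}
    {V : Matrix (Fin s) (Fin p) ℝ} (hU : Uᵀ * U = 1) (hV : Vᵀ * V = 1) (h : IsMP A X) :
    IsMP (V * A * Uᵀ) (U * X * Vᵀ) := by
  obtain ⟨h1, h2, h3, h4⟩ := h
  have hU' : ∀ {t : Type} (Z : Matrix (Fin q) t ℝ), Uᵀ * (U * Z) = Z := fun Z => by
    rw [← Matrix.mul_assoc, hU, Matrix.one_mul]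
  have hV' : ∀ {t : Type} (Z : Matrix (Fin p) t ℝ), Vᵀ * (V * Z) = Z := fun Z => by
    rw [← Matrix.mul_assoc, hV, Matrix.one_mul]
  have h3' : ∀ {t : Type} (Z : Matrix (Fin p) t ℝ), Xᵀ * (Aᵀ * Z) = A * (X * Z) := fun Z => by
    rw [← Matrix.mul_assoc, ← transpose_mul, h3, Matrix.mul_assoc]
  have h4' : ∀ {t : Type} (Z : Matrix (Fin q) t ℝ), Aᵀ * (Xᵀ * Z) = X * (A * Z) := fun Z => by
    rw [← Matrix.mul_assoc, ← transpose_mul, h4, Matrix.mul_assoc]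
  refine ⟨?_, ?_, ?_, ?_⟩
  · simp only [Matrix.mul_assoc, hU', hV']
    simp only [← Matrix.mul_assoc, h1]
  · simp only [Matrix.mul_assoc, hU', hV']
    simp only [← Matrix.mul_assoc, h2]
  · simp only [Matrix.mul_assoc, hU', transpose_mul, transpose_transpose, h3']
  · simp only [Matrix.mul_assoc, hV', transpose_mul, transpose_transpose, h4']

theorem isStarProjection_mul (h : IsMP A X) : IsStarProjection (A * X) where
  isIdempotentElem := by rw [IsIdempotentElem, ← Matrix.mul_assoc, h.1]
  isSelfAdjoint := by
    rw [IsSelfAdjoint, star_eq_conjTranspose, conjTranspose_eq_transpose_of_trivial, h.2.2.1]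

theorem transpose_mul_mul (h : IsMP A X) : Aᵀ * (A * X) = Aᵀ := by
  rw [← h.2.2.1, ← transpose_mul, h.1]

end IsMP

def IsRectDiag {α : Type*} [Zero α] {p q : ℕ} (D : Matrix (Fin p) (Fin q) α) : Prop :=
  ∀ (i : Fin p) (j : Fin q), (i : ℕ) ≠ j → D i j = 0

namespace IsRectDiag

variable {p q : ℕ}

theorem transpose {α : Type*} [Zero α] {D : Matrix (Fin p) (Fin q) α} (hD : IsRectDiag D) :
    IsRectDiag Dᵀ :=
  fun j i h => hD i j (Ne.symm h)

theorem map {α β : Type*} [Zero α] [Zero β] {D : Matrix (Fin p) (Fin q) α} (hD : IsRectDiag D)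
    {f : α → β} (hf : f 0 = 0) : IsRectDiag (D.map f) :=
  fun i j h => by rw [map_apply, hD i j h, hf]

theorem mul_transpose {α : Type*} [NonUnitalNonAssocSemiring α] {D E : Matrix (Fin p) (Fin q) α}
    (hD : IsRectDiag D) (hE : IsRectDiag E) :
    D * Eᵀ = diagonal fun i => ∑ j, D i j * E i j := by
  ext i l
  by_cases hil : i = l
  · subst hil
    simp [mul_apply]
  rw [mul_apply, diagonal_apply_ne _ hil]
  refine Finset.sum_eq_zero fun j _ => ?_
  by_cases hij : (i : ℕ) = j
  · rw [transpose_apply, hE l j fun h => hil (Fin.ext (hij.trans h.symm)), mul_zero]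
  · rw [hD i j hij, zero_mul]

theorem sum_mul_inv_eq_one {D : Matrix (Fin p) (Fin q) ℝ} (hD : IsRectDiag D) {i : Fin p}
    {l : Fin q} (hil : D i l ≠ 0) : ∑ j, D i j * (D i j)⁻¹ = 1 := by
  rw [Fintype.sum_eq_single l fun j hj => ?_, mul_inv_cancel₀ hil]
  have hi : (i : ℕ) = l := by_contra fun h => hil (hD i l h)
  rw [hD i j fun h => hj (Fin.ext (h.symm.trans hi)), zero_mul]

theorem mul_transpose_map_inv_mul {D : Matrix (Fin p) (Fin q) ℝ} (hD : IsRectDiag D) :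
    D * Dᵀ.map (·⁻¹) * D = D := by
  ext i l
  rw [transpose_map, hD.mul_transpose (hD.map _root_.inv_zero), diagonal_mul]
  by_cases hil : D i l = 0
  · rw [hil, mul_zero]
  · simp only [map_apply, hD.sum_mul_inv_eq_one hil, one_mul]

theorem transpose_mul_transpose_map_inv {D : Matrix (Fin p) (Fin q) ℝ} (hD : IsRectDiag D) :
    (D * Dᵀ.map (·⁻¹))ᵀ = D * Dᵀ.map (·⁻¹) := by
  rw [transpose_map, hD.mul_transpose (hD.map _root_.inv_zero), diagonal_transpose]

/-- Since `0⁻¹ = 0`, inverting every entry of `Dᵀ` inverts exactly its nonzero diagonal entries. -/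
theorem isMP {D : Matrix (Fin p) (Fin q) ℝ} (hD : IsRectDiag D) : IsMP D (Dᵀ.map (·⁻¹)) := by
  have hD' : IsRectDiag (Dᵀ.map (·⁻¹)) := hD.transpose.map _root_.inv_zero
  have hinv : (Dᵀ.map (·⁻¹))ᵀ.map (·⁻¹) = D := by
    ext i j
    simp
  refine ⟨hD.mul_transpose_map_inv_mul, ?_, hD.transpose_mul_transpose_map_inv, ?_⟩
  · simpa only [hinv] using hD'.mul_transpose_map_inv_mul
  · simpa only [hinv] using hD'.transpose_mul_transpose_map_inv

theorem sum_col_le {D : Matrix (Fin p) (Fin q) ℝ} (hD : IsRectDiag D) {f : ℝ → ℝ} (hf : f 0 = 0)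
    {c : ℝ} (hc : 0 ≤ c) (hfD : ∀ i j, f (D i j) ≤ c) (j : Fin q) : ∑ i, f (D i j) ≤ c := by
  by_cases hj : (j : ℕ) < p
  · rw [Fintype.sum_eq_single ⟨j, hj⟩ fun i hi => by
      rw [hD i j fun h => hi (Fin.ext h), hf]]
    exact hfD _ _
  · rw [Finset.sum_eq_zero fun i _ => by rw [hD i j fun h => hj (h ▸ i.isLt), hf]]
    exact hc

theorem norm_le {D : Matrix (Fin p) (Fin q) ℝ} (hD : IsRectDiag D) {c : ℝ} (hc : 0 ≤ c)
    (hDc : ∀ i j, |D i j| ≤ c) : ‖D‖ ≤ c := by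
  have hDD : Dᴴ * D = diagonal fun j => ∑ i, D i j * D i j := by
    simpa using hD.transpose.mul_transpose hD.transpose
  rw [mul_self_le_mul_self_iff (norm_nonneg _) hc, ← l2_opNorm_conjTranspose_mul_self, hDD,
    l2_opNorm_diagonal, pi_norm_le_iff_of_nonneg (mul_nonneg hc hc)]
  intro j
  rw [Real.norm_of_nonneg (Finset.sum_nonneg fun i _ => mul_self_nonneg _)]
  exact hD.sum_col_le (f := fun x => x * x) (mul_zero 0) (mul_nonneg hc hc)
    (fun i j => abs_mul_abs_self (D i j) ▸ mul_self_le_mul_self (abs_nonneg _) (hDc i j)) j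

end IsRectDiag

def truncCols {p q : ℕ} (k : ℕ) (S : Matrix (Fin p) (Fin q) ℝ) : Matrix (Fin p) (Fin q) ℝ :=
  of fun i j => if (j : ℕ) < k then S i j else 0

theorem IsRectDiag.truncCols {p q : ℕ} {S : Matrix (Fin p) (Fin q) ℝ} (hS : IsRectDiag S)
    (k : ℕ) : IsRectDiag (truncCols k S) :=
  fun i j h => by simp [_root_.truncCols, hS i j h]

theorem sv_nonneg {p q : ℕ} (A : Matrix (Fin p) (Fin q) ℝ) (j : Fin q) : 0 ≤ sv A j :=
  Real.sqrt_nonneg _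

theorem sv_antitone {p q : ℕ} (A : Matrix (Fin p) (Fin q) ℝ) : Antitone (sv A) :=
  fun _ _ hij => Real.sqrt_le_sqrt (Tuple.monotone_sort _ (Fin.rev_le_rev.mpr hij))

theorem norm_le_sv_zero {n m : ℕ} {A S : Matrix (Fin n) (Fin m) ℝ} (hS : IsRectDiag S)
    (hSdiag : ∀ (i : Fin n) (j : Fin m), (i : ℕ) = (j : ℕ) → S i j = sv A j) (hm : 0 < m) :
    ‖S‖ ≤ sv A ⟨0, hm⟩ := by
  refine hS.norm_le (sv_nonneg A _) fun i j => ?_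
  by_cases hij : (i : ℕ) = j
  · rw [hSdiag i j hij, abs_of_nonneg (sv_nonneg A j)]
    exact sv_antitone A (Fin.le_def.mpr (Nat.zero_le _))
  · rw [hS i j hij, abs_zero]
    exact sv_nonneg A _

theorem norm_truncCols_map_inv_le {n m : ℕ} {A S : Matrix (Fin n) (Fin m) ℝ} (hS : IsRectDiag S)
    (hSdiag : ∀ (i : Fin n) (j : Fin m), (i : ℕ) = (j : ℕ) → S i j = sv A j) {k : ℕ} {l : Fin m}
    (hkl : k ≤ l + 1) (hl : 0 < sv A l) :
    ‖(truncCols k S).map (·⁻¹)‖ ≤ (sv A l)⁻¹ := by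
  refine ((hS.truncCols k).map _root_.inv_zero).norm_le (inv_nonneg.mpr hl.le) fun i j => ?_
  by_cases hij : (i : ℕ) = j ∧ (j : ℕ) < k
  · have hjl : sv A l ≤ sv A j := sv_antitone A (Fin.le_def.mpr (by omega))
    simp only [map_apply, truncCols, of_apply, if_pos hij.2, hSdiag i j hij.1]
    rw [abs_of_nonneg (inv_nonneg.mpr (sv_nonneg A j))]
    exact inv_anti₀ hl hjl
  · have hzero : truncCols k S i j = 0 := by
      by_cases hjk : (j : ℕ) < k
      · exact hS.truncCols k i j fun h => hij ⟨h, hjk⟩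
      · simp [truncCols, hjk]
    simp only [map_apply, hzero, _root_.inv_zero, abs_zero]
    exact inv_nonneg.mpr hl.le

theorem norm_mul_transpose_mul_sub_le {n m : ℕ} {B Bt X : Matrix (Fin n) (Fin m) ℝ}
    (hX : IsMP Bᵀ X) : ‖Bt * Btᵀ * X - B‖ ≤ ‖Bt‖ * ‖B - Bt‖ * ‖X‖ + ‖B - Bt‖ := by
  have hB : B * (Bᵀ * X) = B := by simpa using hX.transpose_mul_mul
  have hdecomp : Bt * Btᵀ * X - B = Bt * (Bt - B)ᵀ * X + (Bt - B) * (Bᵀ * X) := by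
    simp only [transpose_sub, Matrix.sub_mul, Matrix.mul_sub, Matrix.mul_assoc, hB]
    abel
  calc ‖Bt * Btᵀ * X - B‖ ≤ ‖Bt * (Bt - B)ᵀ * X‖ + ‖(Bt - B) * (Bᵀ * X)‖ :=
        hdecomp ▸ norm_add_le _ _
    _ ≤ ‖Bt‖ * ‖(Bt - B)ᵀ‖ * ‖X‖ + ‖Bt - B‖ * 1 := by
        gcongr
        · exact (l2_opNorm_mul _ _).trans (by gcongr; exact l2_opNorm_mul _ _)
        · exact (l2_opNorm_mul _ _).trans (by gcongr; exact hX.isStarProjection_mul.norm_le)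
    _ = ‖Bt‖ * ‖B - Bt‖ * ‖X‖ + ‖B - Bt‖ := by rw [l2_opNorm_transpose, norm_sub_rev, mul_one]

/-- `‖ÃₖÃₖᵀ(Aₖᵀ)† − Aₖ‖ ≤ (1 + σ₁/σₖ)‖Aₖ − Ãₖ‖`, where `Aₖ` is the optimal rank-`k`
truncated SVD of `A` and `Ãₖ = P̃ₖA` is rank-`k` with `P̃ₖ` the orthogonal projection onto
its column space. -/
theorem stmt10 {n m k : ℕ} (hk : 0 < k) (hkm : k ≤ m)
    (A : Matrix (Fin n) (Fin m) ℝ)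
    (U : Matrix (Fin n) (Fin n) ℝ) (V : Matrix (Fin m) (Fin m) ℝ)
    (S : Matrix (Fin n) (Fin m) ℝ)
    (hU : Uᵀ * U = 1) (hV : Vᵀ * V = 1)
    (hSoff : ∀ (i : Fin n) (j : Fin m), (i : ℕ) ≠ (j : ℕ) → S i j = 0)
    (hSdiag : ∀ (i : Fin n) (j : Fin m), (i : ℕ) = (j : ℕ) → S i j = sv A j)
    (hA : A = U * S * Vᵀ)
    (Ak : Matrix (Fin n) (Fin m) ℝ)
    (hAkdef : Ak = U * Matrix.of (fun (i : Fin n) (j : Fin m) => if (j : ℕ) < k then S i j else 0) * Vᵀ)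
    (hσk : 0 < sv A ⟨k - 1, by omega⟩)
    (Atk : Matrix (Fin n) (Fin m) ℝ) (P : Matrix (Fin n) (Fin n) ℝ)
    (hPsym : Pᵀ = P) (hPidem : P * P = P)
    (hAtk : Atk = P * A)
    (X : Matrix (Fin n) (Fin m) ℝ) (hX : IsMP Akᵀ X) :
    specNorm (Atk * Atkᵀ * X - Ak)
      ≤ (1 + sv A ⟨0, by omega⟩ / sv A ⟨k - 1, by omega⟩) * specNorm (Ak - Atk) := by
  have hS : IsRectDiag S := hSoff
  have hAkT : Akᵀ = V * (truncCols k S)ᵀ * Uᵀ := by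
    rw [hAkdef]
    simp only [transpose_mul, transpose_transpose, Matrix.mul_assoc, truncCols]
  have hXeq : X = U * (truncCols k S).map (·⁻¹) * Vᵀ := by
    refine hX.unique ?_
    simpa [hAkT] using (hS.truncCols k).transpose.isMP.isometry_mul_mul_transpose hU hV
  have hAtknorm : ‖Atk‖ ≤ sv A ⟨0, by omega⟩ := calc
    ‖Atk‖ ≤ ‖P‖ * ‖A‖ := hAtk ▸ l2_opNorm_mul P A
    _ ≤ 1 * ‖S‖ := by
        rw [hA, l2_opNorm_isometry_mul_mul_transpose hU hV]
        gcongr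
        exact l2_opNorm_le_one_of_transpose_eq_of_mul_self_eq hPsym hPidem
    _ ≤ sv A ⟨0, by omega⟩ := by rw [one_mul]; exact norm_le_sv_zero hS hSdiag _
  have hXnorm : ‖X‖ ≤ (sv A ⟨k - 1, by omega⟩)⁻¹ := by
    rw [hXeq, l2_opNorm_isometry_mul_mul_transpose hU hV]
    exact norm_truncCols_map_inv_le hS hSdiag (by simp only; omega) hσk
  calc specNorm (Atk * Atkᵀ * X - Ak) ≤ ‖Atk‖ * ‖Ak - Atk‖ * ‖X‖ + ‖Ak - Atk‖ :=
        norm_mul_transpose_mul_sub_le hX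
    _ ≤ sv A ⟨0, by omega⟩ * ‖Ak - Atk‖ * (sv A ⟨k - 1, by omega⟩)⁻¹ + ‖Ak - Atk‖ := by
        gcongr
        exact mul_nonneg (sv_nonneg A _) (norm_nonneg _)
    _ = (1 + sv A ⟨0, by omega⟩ / sv A ⟨k - 1, by omega⟩) * ‖Ak - Atk‖ := by ring
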